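/- arXiv:2409.08336 — 2 statements merged into one kernel-verified Lean document; each statement's English description precedes it below -/
import Mathlib

section
/- Let K be a finite geometric simplicial complex in some ℝ^N whose underlying space (the union of the convex hulls of its faces) is homeomorphic to the n-dimensional sphere S^n, and let T be the associated abstract simplicial complex on the vertex set V of K (whose simplices are the vertex sets of the faces of K). Then Dav(T) ⊆ ℝ^V is a closed connected topological (n+1)-manifold: it is compact, path-connected, and every point of Dav(T) has an open neighbourhood (in Dav(T)) homeomorphic to ℝ^(n+1). -/
open scoped Classical

noncomputable section

/-- A family of finsets of `V` is an abstract simplicial complex on the vertex set `V`: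
it contains the empty set and all singletons, and is closed under taking subsets. -/
def IsComplex {V : Type*} (F : Set (Finset V)) : Prop :=
  ∅ ∈ F ∧ (∀ v : V, ({v} : Finset V) ∈ F) ∧ ∀ σ ∈ F, ∀ τ : Finset V, τ ⊆ σ → τ ∈ F

/-- The Davis complex of a family `F` of finsets of `V`: the subset of the cube
`[-1,1]^V ⊆ ℝ^V` of points `x` such that `{v | x v ≠ ±1}` is a member of `F`. -/
def DavSet {V : Type*} (F : Set (Finset V)) : Set (V → ℝ) :=
  {x | (∀ v, x v ∈ Set.Icc (-1 : ℝ) 1) ∧ ∃ σ ∈ F, ∀ v, (x v ≠ -1 ∧ x v ≠ 1) ↔ v ∈ σ}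

/-!
`Dav(T)` is the intersection of the cube `[-1,1]^V` with the set of points whose free
coordinates form a simplex; the latter is closed since faces of simplices are simplices, so
`Dav(T)` is compact. A point of `Dav(T)` is joined by a segment to a vertex of the cube, and
vertices of the cube differing in one coordinate are joined by an edge of `Dav(T)` because
singletons are simplices; hence `Dav(T)` is path-connected.

Around a point `p`, choose a vertex `ε` of the cube with `ε v * p v ≠ -1` for all `v`. The
coordinates `s v = (1 - ε v * x v) / (1 + ε v * x v)` identify the open set
`{x | ∀ v, ε v * x v ≠ -1}` of `Dav(T)` with the cone `{s ≥ 0 | supp s ∈ T}`, the open cone on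
the realization `|T| = {s ≥ 0 | supp s ∈ T, ∑ s = 1}`. The barycentric map `|T| → |K|` is a
continuous bijection from a compact space, since a point of `|K|` lies in the relative interior
of exactly one face, where its barycentric coordinates are unique. So `|T| ≅ S^n`, and extending
this homeomorphism radially identifies the cone on `|T|` with the cone on `S^n`, which is
`ℝ^(n+1)`.
-/

open Set

theorem IsLowerSet.isClosed_setOf_mem {X V : Type*} [TopologicalSpace X] {F : Set (Finset V)}
    (hF : IsLowerSet F) (f : X → Finset V) (hf : ∀ v, IsOpen {x | v ∈ f x}) :
    IsClosed {x | f x ∈ F} := by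
  refine isOpen_compl_iff.mp (isOpen_iff_forall_mem_open.mpr fun x hx => ?_)
  refine ⟨⋂ v ∈ f x, {x' | v ∈ f x'}, fun x' hx' hx'F => hx (hF (fun v hv => ?_) hx'F),
    isOpen_biInter_finset fun v _ => hf v, mem_iInter₂.mpr fun v hv => hv⟩
  exact mem_iInter₂.mp hx' v hv

/-- An involution of `ℝ \ {-1}` exchanging `(-1, 1]` with `[0, ∞)` and `1` with `0`. -/
def cayley (t : ℝ) : ℝ := (1 - t) / (1 + t)

theorem cayley_cayley {t : ℝ} (ht : t ≠ -1) : cayley (cayley t) = t := by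
  have ht' : 1 + t ≠ 0 := fun h => ht (by linarith)
  unfold cayley
  field_simp
  ring

theorem cayley_nonneg {t : ℝ} (ht : |t| ≤ 1) : 0 ≤ cayley t := by
  have := abs_le.mp ht
  exact div_nonneg (by linarith) (by linarith)

theorem cayley_ne_zero_iff {t : ℝ} (ht : t ≠ -1) : cayley t ≠ 0 ↔ |t| ≠ 1 := by
  have ht' : 1 + t ≠ 0 := fun h => ht (by linarith)
  rw [cayley, div_ne_zero_iff, sub_ne_zero]
  simp only [ne_eq, abs_eq zero_le_one]
  grind

theorem abs_cayley_le_one {s : ℝ} (hs : 0 ≤ s) : |cayley s| ≤ 1 := by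
  rw [cayley, abs_div, abs_of_pos (by linarith : 0 < 1 + s)]
  exact div_le_one_of_le₀ (abs_le.mpr ⟨by linarith, by linarith⟩) (by linarith)

theorem cayley_ne_neg_one {s : ℝ} (hs : 0 ≤ s) : cayley s ≠ -1 := by
  rw [cayley, Ne, div_eq_iff (by linarith)]
  intro h
  linarith

theorem abs_cayley_ne_one_iff {s : ℝ} (hs : 0 ≤ s) : |cayley s| ≠ 1 ↔ s ≠ 0 := by
  rw [← cayley_ne_zero_iff (cayley_ne_neg_one hs), cayley_cayley (by linarith)]

theorem abs_mul_of_abs_eq_one {a : ℝ} (ha : |a| = 1) (x : ℝ) : |a * x| = |x| := by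
  rw [abs_mul, ha, one_mul]

theorem mul_self_of_abs_eq_one {a : ℝ} (ha : |a| = 1) : a * a = 1 := by
  rw [← abs_mul_abs_self, ha, one_mul]

namespace Homeomorph

variable {X Y : Type*} [TopologicalSpace X] [TopologicalSpace Y] [Zero Y] {s : Set X} {t : Set Y}

def extendByZero (h : s ≃ₜ t) : X → Y := Function.extend Subtype.val (fun x => (h x : Y)) 0

variable (h : s ≃ₜ t)

theorem extendByZero_apply {x : X} (hx : x ∈ s) : h.extendByZero x = h ⟨x, hx⟩ :=
  Subtype.val_injective.extend_apply _ _ ⟨x, hx⟩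

theorem mapsTo_extendByZero : MapsTo h.extendByZero s t := fun x hx => by
  rw [h.extendByZero_apply hx]
  exact Subtype.prop _

theorem continuousOn_extendByZero : ContinuousOn h.extendByZero s := by
  rw [continuousOn_iff_continuous_domRestrict]
  convert continuous_subtype_val.comp h.continuous using 1
  funext x
  exact h.extendByZero_apply x.2

theorem leftInvOn_extendByZero [Zero X] : LeftInvOn h.symm.extendByZero h.extendByZero s :=
  fun x hx => by
    rw [h.extendByZero_apply hx, h.symm.extendByZero_apply (Subtype.prop _), Subtype.coe_eta,
      symm_apply_apply]

end Homeomorph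

/-- Each nonzero point `y` of the cone is `gauge y • b` for a unique `b` in the `base` (the
level set `gauge = 1`), so the cone is the open cone on its base. -/
structure GaugedCone (W : Type*) [NormedAddCommGroup W] [NormedSpace ℝ W] where
  carrier : Set W
  gauge : W → ℝ
  zero_mem : (0 : W) ∈ carrier
  smul_mem : ∀ y ∈ carrier, ∀ c : ℝ, 0 < c → c • y ∈ carrier
  continuous_gauge : Continuous gauge
  gauge_smul : ∀ y ∈ carrier, ∀ c : ℝ, 0 < c → gauge (c • y) = c * gauge y
  gauge_pos : ∀ y ∈ carrier, y ≠ 0 → 0 < gauge y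
  norm_le_gauge : ∀ y ∈ carrier, ‖y‖ ≤ gauge y

namespace GaugedCone

variable {W W' : Type*} [NormedAddCommGroup W] [NormedSpace ℝ W]
  [NormedAddCommGroup W'] [NormedSpace ℝ W'] (C : GaugedCone W) (C' : GaugedCone W')

def base : Set W := {y ∈ C.carrier | C.gauge y = 1}

theorem gauge_zero : C.gauge 0 = 0 := by
  have := C.gauge_smul 0 C.zero_mem 2 two_pos
  rw [smul_zero] at this
  linarith

theorem inv_gauge_smul_mem_base {y : W} (hy : y ∈ C.carrier) (hy0 : y ≠ 0) :
    (C.gauge y)⁻¹ • y ∈ C.base := by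
  have hpos := C.gauge_pos y hy hy0
  refine ⟨C.smul_mem y hy _ (inv_pos.mpr hpos), ?_⟩
  rw [C.gauge_smul y hy _ (inv_pos.mpr hpos), inv_mul_cancel₀ hpos.ne']

def coneMap (φ : W → W') (y : W) : W' := C.gauge y • φ ((C.gauge y)⁻¹ • y)

variable {C C'} {φ : W → W'}

@[simp]
theorem coneMap_zero : C.coneMap φ 0 = 0 := by
  rw [coneMap, gauge_zero, zero_smul]

theorem mapsTo_coneMap (hφ : MapsTo φ C.base C'.base) :
    MapsTo (C.coneMap φ) C.carrier C'.carrier := by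
  intro y hy
  rcases eq_or_ne y 0 with rfl | hy0
  · simpa using C'.zero_mem
  · exact C'.smul_mem _ (hφ (C.inv_gauge_smul_mem_base hy hy0)).1 _ (C.gauge_pos y hy hy0)

theorem gauge_coneMap (hφ : MapsTo φ C.base C'.base) {y : W} (hy : y ∈ C.carrier) :
    C'.gauge (C.coneMap φ y) = C.gauge y := by
  rcases eq_or_ne y 0 with rfl | hy0
  · rw [coneMap_zero, gauge_zero, gauge_zero]
  · have hb := hφ (C.inv_gauge_smul_mem_base hy hy0)
    rw [coneMap, C'.gauge_smul _ hb.1 _ (C.gauge_pos y hy hy0), hb.2, mul_one]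

theorem leftInvOn_coneMap {ψ : W' → W} (hφ : MapsTo φ C.base C'.base)
    (hψφ : LeftInvOn ψ φ C.base) : LeftInvOn (C'.coneMap ψ) (C.coneMap φ) C.carrier := by
  intro y hy
  rcases eq_or_ne y 0 with rfl | hy0
  · simp
  · have hb := C.inv_gauge_smul_mem_base hy hy0
    have hpos := C.gauge_pos y hy hy0
    rw [coneMap, gauge_coneMap hφ hy, coneMap, inv_smul_smul₀ hpos.ne', hψφ hb,
      smul_inv_smul₀ hpos.ne']

theorem continuousOn_coneMap (hφ : MapsTo φ C.base C'.base) (hφc : ContinuousOn φ C.base) :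
    ContinuousOn (C.coneMap φ) C.carrier := by
  intro y hy
  rcases eq_or_ne y 0 with rfl | hy0
  · -- at the apex, `‖coneMap φ z‖ ≤ gauge z` and the gauge is continuous
    rw [ContinuousWithinAt, coneMap_zero]
    refine squeeze_zero_norm' ?_ (C.gauge_zero ▸ C.continuous_gauge.continuousWithinAt.tendsto)
    filter_upwards [self_mem_nhdsWithin] with z hz
    exact (C'.norm_le_gauge _ (mapsTo_coneMap hφ hz)).trans (gauge_coneMap hφ hz).le
  · have hgy : C.gauge y ≠ 0 := (C.gauge_pos y hy hy0).ne'
    have hnormalize : ContinuousWithinAt (fun z => (C.gauge z)⁻¹ • z) (C.carrier ∩ {0}ᶜ) y :=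
      ((C.continuous_gauge.continuousAt.inv₀ hgy).smul continuousAt_id).continuousWithinAt
    have hmaps : MapsTo (fun z => (C.gauge z)⁻¹ • z) (C.carrier ∩ {0}ᶜ) C.base :=
      fun z hz => C.inv_gauge_smul_mem_base hz.1 hz.2
    rw [← continuousWithinAt_inter (isOpen_compl_singleton.mem_nhds hy0)]
    exact C.continuous_gauge.continuousWithinAt.smul
      (ContinuousWithinAt.comp (f := fun z => (C.gauge z)⁻¹ • z)
        (hφc _ (C.inv_gauge_smul_mem_base hy hy0)) hnormalize hmaps)

def radialHomeomorph (h : C.base ≃ₜ C'.base) : C.carrier ≃ₜ C'.carrier where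
  toFun := (mapsTo_coneMap h.mapsTo_extendByZero).restrict _ _ _
  invFun := (mapsTo_coneMap h.symm.mapsTo_extendByZero).restrict _ _ _
  left_inv y := Subtype.ext <|
    leftInvOn_coneMap h.mapsTo_extendByZero h.leftInvOn_extendByZero y.2
  right_inv y := Subtype.ext <|
    leftInvOn_coneMap h.symm.mapsTo_extendByZero
      (h.symm_symm ▸ h.symm.leftInvOn_extendByZero) y.2
  continuous_toFun := (continuousOn_coneMap h.mapsTo_extendByZero
    h.continuousOn_extendByZero).mapsToRestrict _
  continuous_invFun := (continuousOn_coneMap h.symm.mapsTo_extendByZero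
    h.symm.continuousOn_extendByZero).mapsToRestrict _

variable (E : Type*) [NormedAddCommGroup E] [NormedSpace ℝ E]

def normCone : GaugedCone E where
  carrier := univ
  gauge := norm
  zero_mem := trivial
  smul_mem _ _ _ _ := trivial
  continuous_gauge := continuous_norm
  gauge_smul y _ c hc := by rw [norm_smul, Real.norm_of_nonneg hc.le]
  gauge_pos _ _ hy := norm_pos_iff.mpr hy
  norm_le_gauge _ _ := le_rfl

theorem base_normCone : (normCone E).base = Metric.sphere 0 1 := by
  ext y
  simp [base, normCone]

end GaugedCone

namespace Geometry.SimplicialComplex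

theorem mem_vertices_of_mem_face {𝕜 E : Type*} [Ring 𝕜] [PartialOrder 𝕜] [AddCommGroup E]
    [Module 𝕜 E] {K : SimplicialComplex 𝕜 E} {s : Finset E} (hs : s ∈ K.faces) {e : E}
    (he : e ∈ s) : e ∈ K.vertices :=
  K.down_closed hs (Finset.singleton_subset_iff.mpr he) (Finset.singleton_nonempty e)

variable {𝕜 E : Type*} [Field 𝕜] [LinearOrder 𝕜] [IsStrictOrderedRing 𝕜] [AddCommGroup E]
  [Module 𝕜 E] {K : SimplicialComplex 𝕜 E} {s t : Finset E} {w w' : E → 𝕜}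

theorem subset_of_sum_smul_mem_convexHull (hs : s ∈ K.faces) (ht : t ∈ K.faces)
    (hw : ∀ e ∈ s, 0 < w e) (hw1 : ∑ e ∈ s, w e = 1)
    (hmem : ∑ e ∈ s, w e • e ∈ convexHull 𝕜 (t : Set E)) : s ⊆ t := by
  classical
  have hmem_s : ∑ e ∈ s, w e • e ∈ convexHull 𝕜 (s : Set E) :=
    Finset.mem_convexHull'.mpr ⟨w, fun e he => (hw e he).le, hw1, rfl⟩
  obtain ⟨u, -, hu1, hux⟩ := Finset.mem_convexHull'.mp
    (Finset.coe_inter s t ▸ K.inter_subset_convexHull hs ht ⟨hmem_s, hmem⟩)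
  -- `u` extended by zero is another barycentric coordinate vector on `s` for the same point
  have hwu : ∀ e ∈ s, w e = if e ∈ t then u e else 0 :=
    (K.indep hs).eq_of_sum_eq_sum_subtype (by simpa [hw1] using hu1.symm)
      (by simpa [ite_smul] using hux.symm)
  intro e he
  by_contra het
  have := hwu e he
  rw [if_neg het] at this
  exact (hw e he).ne' this

theorem eq_of_sum_smul_eq (hs : s ∈ K.faces) (ht : t ∈ K.faces)
    (hw : ∀ e ∈ s, 0 < w e) (hw' : ∀ e ∈ t, 0 < w' e)
    (hw1 : ∑ e ∈ s, w e = 1) (hw1' : ∑ e ∈ t, w' e = 1)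
    (h : ∑ e ∈ s, w e • e = ∑ e ∈ t, w' e • e) : s = t ∧ ∀ e ∈ s, w e = w' e := by
  have hst := subset_of_sum_smul_mem_convexHull hs ht hw hw1
    (h ▸ Finset.mem_convexHull'.mpr ⟨w', fun e he => (hw' e he).le, hw1', rfl⟩)
  have hts := subset_of_sum_smul_mem_convexHull ht hs hw' hw1'
    (h ▸ Finset.mem_convexHull'.mpr ⟨w, fun e he => (hw e he).le, hw1, rfl⟩)
  obtain rfl := hst.antisymm hts
  exact ⟨rfl, (K.indep hs).eq_of_sum_eq_sum_subtype (hw1.trans hw1'.symm) h⟩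

end Geometry.SimplicialComplex

section Davis

variable {V : Type*} {F : Set (Finset V)}

theorem IsComplex.isLowerSet (hF : IsComplex F) : IsLowerSet F :=
  fun σ τ hτσ hσ => hF.2.2 σ hσ τ hτσ

def corner (x : V → ℝ) (v : V) : ℝ := if x v = -1 then -1 else 1

theorem abs_corner (x : V → ℝ) (v : V) : |corner x v| = 1 := by
  unfold corner; split_ifs <;> simp

theorem corner_eq_of_abs_eq_one {x : V → ℝ} {v : V} (h : |x v| = 1) : corner x v = x v := by
  unfold corner
  split_ifs with hx
  · exact hx.symm
  · exact ((abs_eq zero_le_one).mp h).resolve_right hx |>.symm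

theorem corner_mul_ne_neg_one (x : V → ℝ) (v : V) : corner x v * x v ≠ -1 := by
  unfold corner
  split_ifs with h
  · rw [h]; norm_num
  · rwa [one_mul]

variable [Fintype V]

theorem mem_davSet_iff {x : V → ℝ} :
    x ∈ DavSet F ↔ (∀ v, |x v| ≤ 1) ∧ ({v | |x v| ≠ 1} : Finset V) ∈ F := by
  have hfree : ∀ v, (x v ≠ -1 ∧ x v ≠ 1) ↔ |x v| ≠ 1 := fun v => by
    simp only [ne_eq, abs_eq zero_le_one]; tauto
  simp only [DavSet, mem_ofPred_eq, Set.mem_Icc, ← abs_le]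
  refine and_congr_right fun _ => ⟨fun ⟨σ, hσ, hσx⟩ => ?_, fun h => ⟨_, h, fun v => ?_⟩⟩
  · convert hσ
    ext v
    rw [← hσx, hfree, Finset.mem_filter_univ]
  · rw [hfree, Finset.mem_filter_univ]

theorem davSet_eq_closedBall_inter :
    DavSet F = Metric.closedBall 0 1 ∩ {x | ({v | |x v| ≠ 1} : Finset V) ∈ F} := by
  ext x
  rw [mem_davSet_iff, mem_inter_iff, mem_closedBall_zero_iff,
    pi_norm_le_iff_of_nonneg zero_le_one]
  simp only [Real.norm_eq_abs, mem_ofPred_eq]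

theorem isCompact_davSet (hF : IsLowerSet F) : IsCompact (DavSet F) := by
  rw [davSet_eq_closedBall_inter]
  refine (isCompact_closedBall 0 1).inter_right (hF.isClosed_setOf_mem _ fun v => ?_)
  simp only [Finset.mem_filter_univ]
  exact isOpen_ne_fun (by fun_prop) continuous_const

theorem segment_subset_davSet (hF : IsLowerSet F) {x y : V → ℝ} (hx : ∀ v, |x v| ≤ 1)
    (hy : ∀ v, |y v| ≤ 1) (hxy : ({v | |x v| ≠ 1 ∨ x v ≠ y v} : Finset V) ∈ F) :
    segment ℝ x y ⊆ DavSet F := by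
  rintro z ⟨a, b, ha, hb, hab, rfl⟩
  refine mem_davSet_iff.mpr ⟨fun v => ?_, hF (fun v => ?_) hxy⟩
  · calc |a * x v + b * y v| ≤ a * |x v| + b * |y v| := by
          simpa [abs_mul, abs_of_nonneg ha, abs_of_nonneg hb] using abs_add_le (a * x v) (b * y v)
      _ ≤ a * 1 + b * 1 := by gcongr <;> simp [hx, hy]
      _ = 1 := by rw [mul_one, mul_one, hab]
  · simp only [Finset.mem_filter_univ, Pi.add_apply, Pi.smul_apply, smul_eq_mul]
    contrapose!
    rintro ⟨hxv, hxyv⟩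
    rwa [← hxyv, ← add_mul, hab, one_mul]

theorem mem_davSet_of_abs_eq_one (hF : ∅ ∈ F) {ε : V → ℝ} (hε : ∀ v, |ε v| = 1) :
    ε ∈ DavSet F :=
  mem_davSet_iff.mpr ⟨fun v => (hε v).le, by simpa [hε] using hF⟩

theorem joinedIn_davSet_of_abs_eq_one (hF : IsComplex F) {ε ε' : V → ℝ}
    (hε : ∀ v, |ε v| = 1) (hε' : ∀ v, |ε' v| = 1) : JoinedIn (DavSet F) ε ε' := by
  suffices ∀ D : Finset V, ∀ ε : V → ℝ, (∀ v, |ε v| = 1) → (∀ v ∉ D, ε v = ε' v) →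
      JoinedIn (DavSet F) ε ε' from this Finset.univ ε hε (by simp)
  intro D
  induction D using Finset.induction_on with
  | empty =>
    intro ε hε hD
    obtain rfl : ε = ε' := funext fun v => hD v (Finset.notMem_empty v)
    exact JoinedIn.refl (mem_davSet_of_abs_eq_one hF.1 hε)
  | insert a D _ ih =>
    intro ε hε hD
    set ε₁ := Function.update ε a (ε' a)
    have hε₁ : ∀ v, |ε₁ v| = 1 := fun v => by
      rcases eq_or_ne v a with rfl | hva <;> simp [ε₁, *]
    -- `ε` and `ε₁` differ only at `a`, so the edge between them lies in the cube over `{a}`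
    have hedge : ({v | |ε v| ≠ 1 ∨ ε v ≠ ε₁ v} : Finset V) ∈ F := by
      refine hF.isLowerSet (fun v hv => ?_) (hF.2.1 a)
      by_contra hva
      simp_all [ε₁]
    refine (JoinedIn.of_segment_subset (segment_subset_davSet hF.isLowerSet
      (fun v => (hε v).le) (fun v => (hε₁ v).le) hedge)).trans (ih ε₁ hε₁ fun v hv => ?_)
    rcases eq_or_ne v a with rfl | hva
    · simp [ε₁]
    · simp [ε₁, hva, hD v (by simp [hva, hv])]

theorem isPathConnected_davSet (hF : IsComplex F) : IsPathConnected (DavSet F) := by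
  have h1 : ∀ v, |(1 : V → ℝ) v| = 1 := by simp
  refine ⟨1, mem_davSet_of_abs_eq_one hF.1 h1, fun {y} hy => ?_⟩
  obtain ⟨hy1, hyF⟩ := mem_davSet_iff.mp hy
  have hfree : ({v | |y v| ≠ 1 ∨ y v ≠ corner y v} : Finset V) = ({v | |y v| ≠ 1} : Finset V) :=
    Finset.filter_congr fun v _ =>
      or_iff_left_of_imp fun h hv => h (corner_eq_of_abs_eq_one hv).symm
  have hseg : JoinedIn (DavSet F) y (corner y) := JoinedIn.of_segment_subset
    (segment_subset_davSet hF.isLowerSet hy1 (fun v => (abs_corner y v).le) (hfree ▸ hyF))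
  exact (joinedIn_davSet_of_abs_eq_one hF h1 (abs_corner y)).trans hseg.symm

/-- The cone over the realization of `F`. -/
def supportCone (F : Set (Finset V)) : Set (V → ℝ) :=
  {y | (∀ v, 0 ≤ y v) ∧ ({v | y v ≠ 0} : Finset V) ∈ F}

/-- The geometric realization of `F`, in barycentric coordinates. -/
def realization (F : Set (Finset V)) : Set (V → ℝ) :=
  {y ∈ supportCone F | ∑ v, y v = 1}

theorem isCompact_realization (hF : IsLowerSet F) : IsCompact (realization F) := by
  have : realization F = stdSimplex ℝ V ∩ {y | ({v | y v ≠ 0} : Finset V) ∈ F} := by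
    ext y
    simp only [realization, supportCone, stdSimplex, mem_inter_iff, mem_ofPred_eq]
    tauto
  rw [this]
  refine (isCompact_stdSimplex ℝ V).inter_right (hF.isClosed_setOf_mem _ fun v => ?_)
  simp only [Finset.mem_filter_univ]
  exact isOpen_ne_fun (by fun_prop) continuous_const

variable {ε : V → ℝ}

theorem cayley_mul_mem_supportCone (hε : ∀ v, |ε v| = 1) {x : V → ℝ} (hx : x ∈ DavSet F)
    (hxε : ∀ v, ε v * x v ≠ -1) : (fun v => cayley (ε v * x v)) ∈ supportCone F := by
  obtain ⟨hx1, hxF⟩ := mem_davSet_iff.mp hx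
  refine ⟨fun v => cayley_nonneg ((abs_mul_of_abs_eq_one (hε v) (x v)).trans_le (hx1 v)),
    ?_⟩
  convert hxF using 2 with v
  rw [cayley_ne_zero_iff (hxε v), abs_mul_of_abs_eq_one (hε v)]

theorem mul_cayley_mem_davSet (hε : ∀ v, |ε v| = 1) {y : V → ℝ} (hy : y ∈ supportCone F) :
    (fun v => ε v * cayley (y v)) ∈ DavSet F := by
  refine mem_davSet_iff.mpr ⟨fun v => ?_, ?_⟩
  · rw [abs_mul_of_abs_eq_one (hε v)]
    exact abs_cayley_le_one (hy.1 v)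
  · convert hy.2 using 2 with v
    rw [abs_mul_of_abs_eq_one (hε v), abs_cayley_ne_one_iff (hy.1 v)]

def cornerChart (ε : V → ℝ) (hε : ∀ v, |ε v| = 1) :
    {x : DavSet F | ∀ v, ε v * x.1 v ≠ -1} ≃ₜ supportCone F where
  toFun x := ⟨fun v => cayley (ε v * x.1.1 v), cayley_mul_mem_supportCone hε x.1.2 x.2⟩
  invFun y := ⟨⟨fun v => ε v * cayley (y.1 v), mul_cayley_mem_davSet hε y.2⟩, fun v => by
    simpa [← mul_assoc, mul_self_of_abs_eq_one (hε v)] using cayley_ne_neg_one (y.2.1 v)⟩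
  left_inv x := by
    ext v
    simp [cayley_cayley (x.2 v), ← mul_assoc, mul_self_of_abs_eq_one (hε v)]
  right_inv y := by
    ext v
    have hy : y.1 v ≠ -1 := by linarith [y.2.1 v]
    simp [← mul_assoc, mul_self_of_abs_eq_one (hε v), cayley_cayley hy]
  continuous_toFun := by
    refine Continuous.subtype_mk (continuous_pi fun v => ?_) _
    have hx : Continuous fun x : {x : DavSet F | ∀ v, ε v * x.1 v ≠ -1} => ε v * x.1.1 v :=
      continuous_const.mul ((continuous_apply v).comp (continuous_subtype_val.comp
        continuous_subtype_val))
    exact (continuous_const.sub hx).div (continuous_const.add hx) fun x h => x.2 v (by linarith)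
  continuous_invFun := by
    refine Continuous.subtype_mk (Continuous.subtype_mk (continuous_pi fun v => ?_) _) _
    have hy : Continuous fun y : supportCone F => y.1 v :=
      (continuous_apply v).comp continuous_subtype_val
    exact continuous_const.mul ((continuous_const.sub hy).div (continuous_const.add hy)
      fun y => by linarith [y.2.1 v])

theorem exists_isOpen_homeomorph_supportCone (p : DavSet F) :
    ∃ U : Set (DavSet F), IsOpen U ∧ p ∈ U ∧ Nonempty (U ≃ₜ supportCone F) := by
  refine ⟨{x | ∀ v, corner p v * x.1 v ≠ -1}, ?_, corner_mul_ne_neg_one p.1,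
    ⟨cornerChart _ (abs_corner p.1)⟩⟩
  rw [ofPred_forall]
  exact isOpen_iInter_of_finite fun v => isOpen_ne_fun
    (continuous_const.mul ((continuous_apply v).comp continuous_subtype_val)) continuous_const

def supportGaugedCone (hF : ∅ ∈ F) : GaugedCone (V → ℝ) where
  carrier := supportCone F
  gauge y := ∑ v, y v
  zero_mem := ⟨fun _ => le_rfl, by simpa using hF⟩
  smul_mem y hy c hc := ⟨fun v => mul_nonneg hc.le (hy.1 v), by simpa [hc.ne'] using hy.2⟩
  continuous_gauge := by fun_prop
  gauge_smul y _ c _ := by simp [Finset.mul_sum]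
  gauge_pos y hy hy0 := by
    obtain ⟨v, hv⟩ := Function.ne_iff.mp hy0
    exact Finset.sum_pos' (fun w _ => hy.1 w) ⟨v, Finset.mem_univ v, (hy.1 v).lt_of_ne' hv⟩
  norm_le_gauge y hy := by
    refine (pi_norm_le_iff_of_nonneg (Finset.sum_nonneg fun v _ => hy.1 v)).mpr fun v => ?_
    rw [Real.norm_of_nonneg (hy.1 v)]
    exact Finset.single_le_sum (fun w _ => hy.1 w) (Finset.mem_univ v)

def supportConeHomeomorph {E : Type*} [NormedAddCommGroup E] [NormedSpace ℝ E] (hF : ∅ ∈ F)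
    (h : realization F ≃ₜ Metric.sphere (0 : E) 1) : supportCone F ≃ₜ E :=
  (GaugedCone.radialHomeomorph (C := supportGaugedCone hF) (C' := GaugedCone.normCone E)
    (h.trans (Homeomorph.setCongr (GaugedCone.base_normCone E).symm))).trans
    (Homeomorph.Set.univ E)

end Davis

namespace Geometry.SimplicialComplex

variable {E : Type*} [NormedAddCommGroup E] [NormedSpace ℝ E] (K : SimplicialComplex ℝ E)

def vertexFaces : Set (Finset K.vertices) :=
  insert ∅ {σ | σ.map (Function.Embedding.subtype _) ∈ K.faces}

variable {K}

theorem finite_vertices (hfin : K.faces.Finite) : K.vertices.Finite :=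
  K.vertices_eq ▸ hfin.biUnion fun s _ => s.finite_toSet

theorem mem_vertexFaces_of_map_subset {σ : Finset K.vertices} {s : Finset E} (hs : s ∈ K.faces)
    (hσ : σ.map (Function.Embedding.subtype _) ⊆ s) : σ ∈ K.vertexFaces := by
  rcases σ.eq_empty_or_nonempty with rfl | hne
  · exact mem_insert _ _
  · exact Or.inr (K.down_closed hs hσ (hne.map))

theorem isComplex_vertexFaces : IsComplex K.vertexFaces := by
  refine ⟨mem_insert _ _, fun v => Or.inr ?_, fun σ hσ τ hτ => ?_⟩
  · show Finset.map _ {v} ∈ K.faces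
    rw [Finset.map_singleton]
    exact v.2
  rcases hσ with rfl | hσ
  · rw [Finset.subset_empty.mp hτ]
    exact mem_insert _ _
  · exact mem_vertexFaces_of_map_subset hσ (Finset.map_subset_map.mpr hτ)

variable [Fintype K.vertices]

theorem sum_vertices_ite_mem {M : Type*} [AddCommMonoid M] {s : Finset E} (hs : s ∈ K.faces)
    (g : E → M) : ∑ v : K.vertices, (if (v : E) ∈ s then g v else 0) = ∑ e ∈ s, g e := by
  rw [← Finset.sum_filter,
    ← Finset.sum_subtype_of_mem g fun e he => mem_vertices_of_mem_face hs he]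
  congr 1
  ext v
  simp [Finset.mem_subtype]

theorem mem_realization_of_mem_face {s : Finset E} (hs : s ∈ K.faces) {w : E → ℝ}
    (hw : ∀ e ∈ s, 0 ≤ w e) (hw1 : ∑ e ∈ s, w e = 1) :
    (fun v : K.vertices => if (v : E) ∈ s then w v else 0) ∈ realization K.vertexFaces ∧
      ∑ v : K.vertices, (if (v : E) ∈ s then w v else 0) • (v : E) = ∑ e ∈ s, w e • e := by
  refine ⟨⟨⟨fun v => ?_, mem_vertexFaces_of_map_subset hs fun e he => ?_⟩, ?_⟩, ?_⟩
  · dsimp only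
    split_ifs with hv
    exacts [hw _ hv, le_rfl]
  · obtain ⟨v, hv, rfl⟩ := Finset.mem_map.mp he
    by_contra hvs
    simp only [Finset.mem_filter_univ, ne_eq, ite_eq_right_iff, Classical.not_imp] at hv
    exact hvs hv.1
  · rw [sum_vertices_ite_mem hs, hw1]
  · simp_rw [ite_smul, zero_smul]
    exact sum_vertices_ite_mem hs (fun e => w e • e)

theorem exists_face_of_mem_realization {y : K.vertices → ℝ}
    (hy : y ∈ realization K.vertexFaces) :
    ∃ s ∈ K.faces, ∃ w : E → ℝ, (∀ e ∈ s, 0 < w e) ∧ ∑ e ∈ s, w e = 1 ∧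
      ∑ e ∈ s, w e • e = ∑ v, y v • (v : E) ∧ ∀ v, y v = if (v : E) ∈ s then w v else 0 := by
  obtain ⟨⟨hy0, hyF⟩, hy1⟩ := hy
  set s := ({v | y v ≠ 0} : Finset K.vertices).map (Function.Embedding.subtype _)
  set w : E → ℝ := Function.extend Subtype.val y 0
  have hws : ∀ v : K.vertices, w v = y v := Subtype.val_injective.extend_apply _ _
  have hs : s ∈ K.faces := by
    refine hyF.resolve_left fun h => ?_
    have hy_zero : ∀ v, y v = 0 := fun v => by
      simpa using Finset.filter_eq_empty_iff.mp h (Finset.mem_univ v)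
    simp [hy_zero] at hy1
  have hy_eq : ∀ v, y v = if (v : E) ∈ s then w v else 0 := fun v => by
    by_cases hv : y v = 0 <;> simp [s, hv, hws]
  refine ⟨s, hs, w, fun e he => ?_, ?_, ?_, hy_eq⟩
  · obtain ⟨v, hv, rfl⟩ := Finset.mem_map.mp he
    show 0 < w v
    rw [hws]
    exact (hy0 v).lt_of_ne' (by simpa using hv)
  · rw [← sum_vertices_ite_mem hs, ← hy1]
    exact Finset.sum_congr rfl fun v _ => (hy_eq v).symm
  · simp_rw [← sum_vertices_ite_mem hs (fun e => w e • e), hy_eq, ite_smul, zero_smul]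

theorem bijOn_realization_space :
    BijOn (fun y : K.vertices → ℝ => ∑ v, y v • (v : E)) (realization K.vertexFaces) K.space := by
  refine ⟨fun y hy => ?_, fun y hy y' hy' h => ?_, fun x hx => ?_⟩
  · obtain ⟨s, hs, w, hw, hw1, hwy, -⟩ := exists_face_of_mem_realization hy
    refine convexHull_subset_space hs (Finset.mem_convexHull'.mpr ?_)
    exact ⟨w, fun e he => (hw e he).le, hw1, hwy⟩
  · obtain ⟨s, hs, w, hw, hw1, hwy, hy⟩ := exists_face_of_mem_realization hy
    obtain ⟨t, ht, w', hw', hw1', hwy', hy'⟩ := exists_face_of_mem_realization hy'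
    obtain ⟨rfl, hww'⟩ :=
      eq_of_sum_smul_eq hs ht hw hw' hw1 hw1' (hwy.trans (h.trans hwy'.symm))
    funext v
    rw [hy, hy']
    split_ifs with hv
    exacts [hww' _ hv, rfl]
  · obtain ⟨s, hs, hx⟩ := mem_space_iff.mp hx
    obtain ⟨w, hw, hw1, rfl⟩ := Finset.mem_convexHull'.mp hx
    exact ⟨_, mem_realization_of_mem_face hs hw hw1⟩

def realizationHomeomorph : realization K.vertexFaces ≃ₜ K.space :=
  haveI := isCompact_iff_compactSpace.mp
    (isCompact_realization (isComplex_vertexFaces (K := K)).isLowerSet)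
  Continuous.homeoOfEquivCompactToT2 (f := bijOn_realization_space.equiv _)
    ((continuous_finsetSum _ fun v _ => (continuous_apply v).smul continuous_const).restrict
      bijOn_realization_space.mapsTo)

end Geometry.SimplicialComplex

/-- Let `K` be a finite geometric simplicial complex in `ℝ^N` whose underlying space is
homeomorphic to the `n`-sphere, and let `T` be the associated abstract simplicial complex on
the vertex set of `K`. Then the Davis complex `Dav(T)` is a closed connected topological
`(n+1)`-manifold: compact, path-connected, and locally homeomorphic to `ℝ^(n+1)`. -/
theorem davis_closed_manifold (N n : ℕ)
    (K : Geometry.SimplicialComplex ℝ (EuclideanSpace ℝ (Fin N)))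
    (hfin : K.faces.Finite)
    (hsphere : Nonempty (↥K.space ≃ₜ ↥(Metric.sphere (0 : EuclideanSpace ℝ (Fin (n + 1))) 1))) :
    let A : Set (Finset ↥K.vertices) :=
      insert ∅ {σ | σ.map (Function.Embedding.subtype _) ∈ K.faces}
    IsCompact (DavSet A) ∧ IsPathConnected (DavSet A) ∧
      ∀ p : ↥(DavSet A), ∃ U : Set ↥(DavSet A), IsOpen U ∧ p ∈ U ∧
        Nonempty (↥U ≃ₜ EuclideanSpace ℝ (Fin (n + 1))) := by
  intro A
  have : Fintype K.vertices := (Geometry.SimplicialComplex.finite_vertices hfin).fintype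
  have hA : IsComplex A := Geometry.SimplicialComplex.isComplex_vertexFaces
  obtain ⟨e⟩ := hsphere
  let cone : supportCone A ≃ₜ EuclideanSpace ℝ (Fin (n + 1)) :=
    supportConeHomeomorph hA.1 (K.realizationHomeomorph.trans e)
  refine ⟨isCompact_davSet hA.isLowerSet, isPathConnected_davSet hA, fun p => ?_⟩
  obtain ⟨U, hU, hpU, ⟨chart⟩⟩ := exists_isOpen_homeomorph_supportCone p
  exact ⟨U, hU, hpU, ⟨chart.trans cone⟩⟩
end
end

section
/- Let T be a finite flag simplicial complex on vertex set V, let v ∈ V be a vertex whose link S = Lk(v) satisfies f₁(S) = 3·f₀(S) - 6 (as holds when S is a triangulation of the 2-sphere), and let T_v be the double of T at v. Then γ₂(T_v) = 2·γ₂(T), where γ₂ = 16 - 5·f₀ + f₁. -/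
/-! The double `T_v` is two copies of the antistar of `v` glued along the faces spanned by
neighbours of `v`; in a flag complex these are exactly the faces of the link `S`, so
`f_k(T_v) = 2 f_k(antistar) - f_k(S)`. On the other hand every face of `T` through `v` is a cone
over a face of `S`, so `f_k(T) = f_k(antistar) + f_{k-1}(S)`. Substituting both into `γ₂`,
`γ₂(T_v) - 2 γ₂(T) = 3 f₀(S) - f₁(S) - 6 = 0`. -/

open scoped Classical

noncomputable section

/-- `f₀`: the number of vertices (`0`-simplices) of a family of finsets. -/
def fZero {V : Type*} (F : Set (Finset V)) : ℕ := {σ ∈ F | σ.card = 1}.ncard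

/-- `f₁`: the number of edges (`1`-simplices) of a family of finsets. -/
def fOne {V : Type*} (F : Set (Finset V)) : ℕ := {σ ∈ F | σ.card = 2}.ncard

/-- `γ₂(T) = 16 - 5·f₀(T) + f₁(T)`, as an integer. -/
def gammaTwo {V : Type*} (F : Set (Finset V)) : ℤ := 16 - 5 * (fZero F : ℤ) + (fOne F : ℤ)

/-- `T` is a flag simplicial complex: every set of vertices that are pairwise joined by
`1`-simplices of `T` is itself a simplex of `T`. -/
def IsFlag {V : Type*} (F : Set (Finset V)) : Prop :=
  ∀ σ : Finset V, (∀ u ∈ σ, ({u} : Finset V) ∈ F) →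
    (∀ u ∈ σ, ∀ w ∈ σ, u ≠ w → ({u, w} : Finset V) ∈ F) → σ ∈ F

/-- The set of neighbours of the vertex `v` (the vertex set of the link of `v`). -/
def nbrs {V : Type*} [DecidableEq V] (F : Set (Finset V)) (v : V) : Set V :=
  {u | u ≠ v ∧ ({u, v} : Finset V) ∈ F}

/-- The vertex set of the double of a complex `F` at a vertex `v`: the neighbours of `v`
appear once (with tag `true`), while all other vertices distinct from `v` appear in two
copies, tagged by a Boolean. -/
def DblVtx {V : Type*} [DecidableEq V] (F : Set (Finset V)) (v : V) : Type _ :=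
  {p : V × Bool // p.1 ≠ v ∧ (p.1 ∈ nbrs F v → p.2 = true)}

/-- The copy-`i` inclusion of a vertex `u ≠ v` of the antistar of `v` into the double:
it fixes the neighbours of `v` and sends every other vertex to its copy `i`. -/
def inclVtx {V : Type*} [DecidableEq V] (F : Set (Finset V)) (v : V) (i : Bool)
    (u : V) (hu : u ≠ v) : DblVtx F v :=
  ⟨(u, if u ∈ nbrs F v then true else i), hu, fun h => if_pos h⟩

/-- The copy-`i` image in the double of a simplex `σ` of the antistar of `v`. -/
def inclFace {V : Type*} [DecidableEq V] (F : Set (Finset V)) (v : V) (i : Bool)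
    (σ : Finset V) (hσ : v ∉ σ) : Finset (DblVtx F v) :=
  σ.attach.image fun u => inclVtx F v i u.1 (fun h => hσ (h ▸ u.2))

/-- The faces of the double `T_v` of `T` at `v`: the images of the simplices of the antistar
of `v` under the two copy inclusions. -/
def doubleFaces {V : Type*} [DecidableEq V] (F : Set (Finset V)) (v : V) :
    Set (Finset (DblVtx F v)) :=
  {ρ | ∃ (i : Bool) (σ : Finset V) (_ : σ ∈ F) (hv : v ∉ σ), ρ = inclFace F v i σ hv}

/-- The link of the vertex `v` in `F`. -/
def linkFaces {V : Type*} [DecidableEq V] (F : Set (Finset V)) (v : V) : Set (Finset V) :=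
  {σ | v ∉ σ ∧ insert v σ ∈ F}

section Counting

variable {V : Type*}

def fCount (F : Set (Finset V)) (k : ℕ) : ℕ := {σ ∈ F | σ.card = k}.ncard

theorem fZero_eq_fCount (F : Set (Finset V)) : fZero F = fCount F 1 := rfl

theorem fOne_eq_fCount (F : Set (Finset V)) : fOne F = fCount F 2 := rfl

def antistar (F : Set (Finset V)) (v : V) : Set (Finset V) := {σ ∈ F | v ∉ σ}

def induced (F : Set (Finset V)) (W : Set V) : Set (Finset V) := {σ ∈ F | ↑σ ⊆ W}

variable [DecidableEq V]

theorem fCount_succ_eq_antistar_add_link [Finite V] (F : Set (Finset V)) (v : V) (k : ℕ) :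
    fCount F (k + 1) = fCount (antistar F v) (k + 1) + fCount (linkFaces F v) k := by
  have hsplit : {σ ∈ F | σ.card = k + 1} =
      {σ ∈ antistar F v | σ.card = k + 1} ∪ insert v '' {σ ∈ linkFaces F v | σ.card = k} := by
    ext σ
    by_cases hv : v ∈ σ
    · simp only [Set.mem_ofPred_eq, Set.mem_union, Set.mem_image, antistar, linkFaces, hv,
        not_true_eq_false, and_false, false_and, false_or]
      constructor
      · rintro ⟨hσ, hcard⟩
        refine ⟨σ.erase v, ⟨⟨Finset.notMem_erase v σ, by rwa [Finset.insert_erase hv]⟩, ?_⟩,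
          Finset.insert_erase hv⟩
        rw [Finset.card_erase_of_mem hv, hcard, Nat.add_sub_cancel]
      · rintro ⟨τ, ⟨⟨hvτ, hτ⟩, hcard⟩, rfl⟩
        exact ⟨hτ, by rw [Finset.card_insert_of_notMem hvτ, hcard]⟩
    · simp only [Set.mem_ofPred_eq, Set.mem_union, Set.mem_image, antistar, hv,
        not_false_eq_true, and_true]
      refine ⟨Or.inl, ?_⟩
      rintro (h | ⟨τ, -, rfl⟩)
      · exact h
      · exact absurd (Finset.mem_insert_self v τ) hv
  have hdisj : Disjoint {σ ∈ antistar F v | σ.card = k + 1}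
      (insert v '' {σ ∈ linkFaces F v | σ.card = k}) := by
    rw [Set.disjoint_left]
    rintro _ ⟨⟨-, hv⟩, -⟩ ⟨τ, -, rfl⟩
    exact hv (Finset.mem_insert_self v τ)
  have hinj : Set.InjOn (insert v) {σ ∈ linkFaces F v | σ.card = k} := by
    rintro σ ⟨⟨hσ, -⟩, -⟩ τ ⟨⟨hτ, -⟩, -⟩ h
    rw [← Finset.erase_insert hσ, ← Finset.erase_insert hτ]
    exact congrArg (·.erase v) h
  rw [fCount, hsplit, Set.ncard_union_eq hdisj, hinj.ncard_image]
  rfl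

theorem fCount_linkFaces_zero {F : Set (Finset V)} {v : V} (hv : {v} ∈ F) :
    fCount (linkFaces F v) 0 = 1 := by
  have : {σ ∈ linkFaces F v | σ.card = 0} = {∅} := by
    ext σ
    simp only [Set.mem_ofPred_eq, Set.mem_singleton_iff, Finset.card_eq_zero, linkFaces]
    constructor
    · exact fun h => h.2
    · rintro rfl
      exact ⟨⟨Finset.notMem_empty v, hv⟩, rfl⟩
  rw [fCount, this, Set.ncard_singleton]

theorem IsFlag.linkFaces_eq_induced {F : Set (Finset V)} (hF : IsComplex F) (hflag : IsFlag F)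
    (v : V) : linkFaces F v = induced F (nbrs F v) := by
  ext σ
  constructor
  · rintro ⟨hvσ, hσ⟩
    refine ⟨hF.2.2 _ hσ σ (Finset.subset_insert v σ), fun u hu => ⟨?_, ?_⟩⟩
    · rintro rfl
      exact hvσ hu
    · refine hF.2.2 _ hσ _ ?_
      simp [Finset.insert_subset_iff, Finset.mem_insert_of_mem (Finset.mem_coe.1 hu)]
  · rintro ⟨hσ, hW⟩
    have hvσ : v ∉ σ := fun h => (hW h).1 rfl
    have hpair : ∀ u ∈ insert v σ, ∀ w ∈ insert v σ, u ≠ w → ({u, w} : Finset V) ∈ F := by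
      intro u hu w hw huw
      rcases Finset.mem_insert.1 hu with rfl | huσ <;> rcases Finset.mem_insert.1 hw with rfl | hwσ
      · exact absurd rfl huw
      · rw [Finset.pair_comm]; exact (hW hwσ).2
      · exact (hW huσ).2
      · exact hF.2.2 σ hσ _ (Finset.insert_subset huσ (Finset.singleton_subset_iff.2 hwσ))
    refine ⟨hvσ, hflag _ (fun u _ => hF.2.1 u) fun u hu w hw huw => ?_⟩
    convert hpair u hu w hw huw

end Counting

section Double

variable {V : Type*} [DecidableEq V] {F : Set (Finset V)} {v : V}

instance [Finite V] : Finite (DblVtx F v) := by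
  unfold DblVtx; infer_instance

theorem mem_inclFace {i : Bool} {σ : Finset V} {hσ : v ∉ σ} {x : DblVtx F v} :
    x ∈ inclFace F v i σ hσ ↔ x.1.1 ∈ σ ∧ x.1.2 = if x.1.1 ∈ nbrs F v then true else i := by
  unfold inclFace
  rw [Finset.mem_image]
  constructor
  · rintro ⟨u, -, rfl⟩
    exact ⟨u.2, rfl⟩
  · rintro ⟨hx, htag⟩
    exact ⟨⟨x.1.1, hx⟩, Finset.mem_attach _ _, Subtype.ext (Prod.ext rfl htag.symm)⟩

variable (F v) in
/-- `inclFace` extended to all finsets by discarding `v`, so that images of sets can be taken. -/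
def copyFace (i : Bool) (σ : Finset V) : Finset (DblVtx F v) :=
  inclFace F v i (σ.erase v) (σ.notMem_erase v)

theorem mem_copyFace {i : Bool} {σ : Finset V} {x : DblVtx F v} :
    x ∈ copyFace F v i σ ↔ x.1.1 ∈ σ ∧ x.1.2 = if x.1.1 ∈ nbrs F v then true else i := by
  rw [copyFace, mem_inclFace, Finset.mem_erase, and_iff_right x.2.1]

theorem copyFace_eq_inclFace {i : Bool} {σ : Finset V} (hσ : v ∉ σ) :
    copyFace F v i σ = inclFace F v i σ hσ := by
  ext x
  rw [mem_copyFace, mem_inclFace]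

theorem image_copyFace (i : Bool) (σ : Finset V) :
    (copyFace F v i σ).image (fun x => x.1.1) = σ.erase v := by
  ext u
  simp only [Finset.mem_image, mem_copyFace, Finset.mem_erase]
  constructor
  · rintro ⟨x, ⟨hx, -⟩, rfl⟩
    exact ⟨x.2.1, hx⟩
  · rintro ⟨huv, hu⟩
    exact ⟨⟨(u, if u ∈ nbrs F v then true else i), huv, fun h => if_pos h⟩, ⟨hu, rfl⟩, rfl⟩

theorem card_copyFace (i : Bool) {σ : Finset V} (hσ : v ∉ σ) :
    (copyFace F v i σ).card = σ.card := by
  have hinj : Set.InjOn (fun x : DblVtx F v => x.1.1) (copyFace F v i σ) := by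
    intro x hx y hy hxy
    have hx := (mem_copyFace.1 hx).2
    have hy := (mem_copyFace.1 hy).2
    simp only at hxy
    exact Subtype.ext (Prod.ext hxy (by rw [hx, hy, hxy]))
  rw [← Finset.card_image_of_injOn hinj, image_copyFace, Finset.erase_eq_of_notMem hσ]

theorem eq_of_copyFace_eq {i j : Bool} {σ τ : Finset V} (hσ : v ∉ σ) (hτ : v ∉ τ)
    (h : copyFace F v i σ = copyFace F v j τ) : σ = τ := by
  have := congrArg (Finset.image fun x : DblVtx F v => x.1.1) h
  rwa [image_copyFace, image_copyFace, Finset.erase_eq_of_notMem hσ,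
    Finset.erase_eq_of_notMem hτ] at this

theorem copyFace_injOn (i : Bool) : Set.InjOn (copyFace F v i) {σ | v ∉ σ} :=
  fun _ hσ _ hτ => eq_of_copyFace_eq hσ hτ

theorem copyFace_eq_of_subset_nbrs {σ : Finset V} (hσ : ↑σ ⊆ nbrs F v) (i j : Bool) :
    copyFace F v i σ = copyFace F v j σ := by
  ext x
  simp only [mem_copyFace]
  constructor <;> rintro ⟨hx, htag⟩ <;> exact ⟨hx, by rwa [if_pos (hσ hx)] at htag ⊢⟩

theorem subset_nbrs_of_copyFace_eq {σ : Finset V} (hσ : v ∉ σ)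
    (h : copyFace F v true σ = copyFace F v false σ) : ↑σ ⊆ nbrs F v := by
  intro u hu
  by_contra hW
  have hx : (⟨(u, true), fun h => hσ (h ▸ hu), fun _ => rfl⟩ : DblVtx F v) ∈
      copyFace F v true σ := mem_copyFace.2 ⟨hu, by simp [hW]⟩
  rw [h] at hx
  have := (mem_copyFace.1 hx).2
  simp [hW] at this

variable (F v) in
theorem fCount_doubleFaces_add [Finite V] (k : ℕ) :
    fCount (doubleFaces F v) k + fCount (induced F (nbrs F v)) k =
      2 * fCount (antistar F v) k := by
  set A := {σ ∈ antistar F v | σ.card = k}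
  set B := {σ ∈ induced F (nbrs F v) | σ.card = k}
  have hA : A ⊆ {σ | v ∉ σ} := fun σ hσ => hσ.1.2
  have hB : B ⊆ A := fun σ ⟨⟨hσ, hW⟩, hk⟩ => ⟨⟨hσ, fun h => (hW h).1 rfl⟩, hk⟩
  have hunion : {ρ ∈ doubleFaces F v | ρ.card = k} =
      copyFace F v true '' A ∪ copyFace F v false '' A := by
    ext ρ
    constructor
    · rintro ⟨⟨i, σ, hσ, hv, rfl⟩, hk⟩
      rw [← copyFace_eq_inclFace hv, card_copyFace i hv] at *
      cases i
      · exact Or.inr ⟨σ, ⟨⟨hσ, hv⟩, hk⟩, rfl⟩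
      · exact Or.inl ⟨σ, ⟨⟨hσ, hv⟩, hk⟩, rfl⟩
    · rintro (⟨σ, ⟨⟨hσ, hv⟩, hk⟩, rfl⟩ | ⟨σ, ⟨⟨hσ, hv⟩, hk⟩, rfl⟩) <;>
        exact ⟨⟨_, σ, hσ, hv, copyFace_eq_inclFace hv⟩, (card_copyFace _ hv).trans hk⟩
  have hinter : copyFace F v true '' A ∩ copyFace F v false '' A = copyFace F v true '' B := by
    ext ρ
    constructor
    · rintro ⟨⟨σ, hσA, rfl⟩, ⟨τ, hτA, h⟩⟩
      obtain rfl := eq_of_copyFace_eq (hA hσA) (hA hτA) h.symm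
      exact ⟨σ, ⟨⟨hσA.1.1, subset_nbrs_of_copyFace_eq (hA hσA) h.symm⟩, hσA.2⟩, rfl⟩
    · rintro ⟨σ, hσB, rfl⟩
      exact ⟨⟨σ, hB hσB, rfl⟩, σ, hB hσB, copyFace_eq_of_subset_nbrs hσB.1.2 false true⟩
  have key := Set.ncard_union_add_ncard_inter (copyFace F v true '' A) (copyFace F v false '' A)
  rw [← hunion, hinter, ((copyFace_injOn true).mono hA).ncard_image,
    ((copyFace_injOn false).mono hA).ncard_image,
    ((copyFace_injOn true).mono (hB.trans hA)).ncard_image] at key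
  rw [fCount, fCount, fCount, key, two_mul]

end Double

/-- If `v` is a vertex of a finite flag simplicial complex `T` whose link `S` satisfies
`f₁(S) = 3·f₀(S) - 6` (as holds for triangulations of the `2`-sphere), then the double `T_v`
satisfies `γ₂(T_v) = 2·γ₂(T)`. -/
theorem double_gammaTwo {V : Type} [Fintype V] [DecidableEq V]
    (F : Set (Finset V)) (hF : IsComplex F) (hflag : IsFlag F) (v : V)
    (hlink : (fOne (linkFaces F v) : ℤ) = 3 * (fZero (linkFaces F v) : ℤ) - 6) :
    gammaTwo (doubleFaces F v) = 2 * gammaTwo F := by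
  have hvert : fCount F 1 = fCount (antistar F v) 1 + fCount (linkFaces F v) 0 :=
    fCount_succ_eq_antistar_add_link F v 0
  have hedge : fCount F 2 = fCount (antistar F v) 2 + fCount (linkFaces F v) 1 :=
    fCount_succ_eq_antistar_add_link F v 1
  have hempty := fCount_linkFaces_zero (hF.2.1 v)
  have hdvert := fCount_doubleFaces_add F v 1
  have hdedge := fCount_doubleFaces_add F v 2
  rw [← hflag.linkFaces_eq_induced hF] at hdvert hdedge
  simp only [gammaTwo, fZero_eq_fCount, fOne_eq_fCount] at hlink ⊢
  omega
end
end
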